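/- Let d ≥ 2, r > 0, and let D = {(x_i, y_i)}_{i=1}^n ⊂ ℝ^d × {−1, +1} satisfy (x_i)_1 = y_i·r/2, with induced dataset D̃ (first coordinate removed) linearly separable with margin γ̃ > 0. Then the maximum ℓ2-margin of D equals √((r/2)² + γ̃²), i.e. max_{‖θ‖₂ ≤ 1} min_{i∈[n]} y_i θᵀ x_i = √(r²/4 + γ̃²). -/

import Mathlib

/-!
Since `y i * x i 0 = r / 2` for every `i`, the margin of `θ = (a, θ̃)` is `a r / 2` plus the
margin of `θ̃` on the induced dataset, and by positive homogeneity the latter is at most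
`‖θ̃‖ γ̃`, with equality for a rescaled maximiser of the induced problem. Maximising
`a r / 2 + b γ̃` over `a² + b² ≤ 1` gives `√(r² / 4 + γ̃²)` by Cauchy–Schwarz in the plane.
-/

open MeasureTheory ProbabilityTheory Real Set
open scoped ENNReal BigOperators

noncomputable section

/-- Euclidean dot product on `Fin d → ℝ`. -/
def dot {d : ℕ} (u v : Fin d → ℝ) : ℝ := ∑ j, u j * v j

/-- Euclidean (`ℓ2`) norm on `Fin d → ℝ`. -/
def norm2 {d : ℕ} (u : Fin d → ℝ) : ℝ := Real.sqrt (∑ j, (u j) ^ 2)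

/-- The (minimum) margin of the linear classifier `θ` on the dataset `{(x i, y i)}`. -/
def margin {d n : ℕ} (x : Fin n → Fin d → ℝ) (y : Fin n → ℝ) (θ : Fin d → ℝ) : ℝ :=
  ⨅ i, y i * dot θ (x i)

/-- The maximum `ℓ2`-margin of the dataset is the greatest element of this set. -/
def unitBallMargins {d n : ℕ} (x : Fin n → Fin d → ℝ) (y : Fin n → ℝ) : Set ℝ :=
  {c | ∃ θ : Fin d → ℝ, norm2 θ ≤ 1 ∧ c = margin x y θ}

lemma norm2_eq_norm {d : ℕ} (u : Fin d → ℝ) :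
    norm2 u = ‖(WithLp.toLp 2 u : EuclideanSpace ℝ (Fin d))‖ := by
  simp [norm2, EuclideanSpace.norm_eq]

lemma norm2_nonneg {d : ℕ} (u : Fin d → ℝ) : 0 ≤ norm2 u := Real.sqrt_nonneg _

lemma norm2_smul {d : ℕ} (c : ℝ) (u : Fin d → ℝ) : norm2 (c • u) = |c| * norm2 u := by
  simp [norm2_eq_norm, norm_smul]

lemma norm2_eq_zero {d : ℕ} {u : Fin d → ℝ} : norm2 u = 0 ↔ u = 0 := by
  simp [norm2_eq_norm]

lemma sq_norm2_eq_sq_add_sq_norm2_tail {m : ℕ} (θ : Fin (m + 1) → ℝ) :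
    norm2 θ ^ 2 = θ 0 ^ 2 + norm2 (Fin.tail θ) ^ 2 := by
  rw [norm2, norm2, Real.sq_sqrt (by positivity), Real.sq_sqrt (by positivity),
    Fin.sum_univ_succ]
  rfl

lemma margin_zero {d n : ℕ} (x : Fin n → Fin d → ℝ) (y : Fin n → ℝ) : margin x y 0 = 0 := by
  simp [margin, dot]

lemma margin_smul {d n : ℕ} (x : Fin n → Fin d → ℝ) (y : Fin n → ℝ) (θ : Fin d → ℝ)
    {c : ℝ} (hc : 0 ≤ c) : margin x y (c • θ) = c * margin x y θ := by
  rw [margin, margin, Real.mul_iInf_of_nonneg hc]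
  refine iInf_congr fun i => ?_
  simp only [dot, Pi.smul_apply, smul_eq_mul, Finset.mul_sum]
  exact Finset.sum_congr rfl fun j _ => by ring

lemma margin_eq_mul_add_margin_tail {m n : ℕ} [Nonempty (Fin n)] {c : ℝ}
    {x : Fin n → Fin (m + 1) → ℝ} {y : Fin n → ℝ} (hx0 : ∀ i, y i * x i 0 = c)
    (θ : Fin (m + 1) → ℝ) :
    margin x y θ = θ 0 * c + margin (fun i => Fin.tail (x i)) y (Fin.tail θ) := by
  rw [margin, margin, add_comm (θ 0 * c), ciInf_add (Set.finite_range _).bddBelow]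
  refine iInf_congr fun i => ?_
  rw [dot, Fin.sum_univ_succ, mul_add, mul_left_comm, hx0 i, add_comm]
  rfl

lemma margin_le_norm2_mul_of_isGreatest {d n : ℕ} {x : Fin n → Fin d → ℝ} {y : Fin n → ℝ}
    {γ : ℝ} (hγ : IsGreatest (unitBallMargins x y) γ) (θ : Fin d → ℝ) :
    margin x y θ ≤ norm2 θ * γ := by
  rcases (norm2_nonneg θ).eq_or_lt with hθ | hθ
  · rw [← hθ, norm2_eq_zero.mp hθ.symm, margin_zero, zero_mul]
  · have hunit : norm2 ((norm2 θ)⁻¹ • θ) ≤ 1 := by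
      rw [norm2_smul, abs_inv, abs_of_pos hθ, inv_mul_cancel₀ hθ.ne']
    have hle := hγ.2 ⟨_, hunit, rfl⟩
    rwa [margin_smul _ _ _ (inv_nonneg.mpr hθ.le), inv_mul_le_iff₀ hθ] at hle

lemma mul_add_mul_le_sqrt {a b u v : ℝ} (hab : a ^ 2 + b ^ 2 ≤ 1) :
    a * u + b * v ≤ √(u ^ 2 + v ^ 2) := by
  refine (le_abs_self _).trans (Real.abs_le_sqrt ?_)
  nlinarith [sq_nonneg (a * v - b * u), sq_nonneg u, sq_nonneg v]

lemma margin_le_sqrt_of_isGreatest_tail {m n : ℕ} [Nonempty (Fin n)] {c γ : ℝ}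
    {x : Fin n → Fin (m + 1) → ℝ} {y : Fin n → ℝ} (hx0 : ∀ i, y i * x i 0 = c)
    (hγ : IsGreatest (unitBallMargins (fun i => Fin.tail (x i)) y) γ)
    {θ : Fin (m + 1) → ℝ} (hθ : norm2 θ ≤ 1) :
    margin x y θ ≤ √(c ^ 2 + γ ^ 2) := by
  have hsq : θ 0 ^ 2 + norm2 (Fin.tail θ) ^ 2 ≤ 1 := by
    rw [← sq_norm2_eq_sq_add_sq_norm2_tail]
    exact (sq_le_one_iff₀ (norm2_nonneg θ)).mpr hθ
  calc margin x y θ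
      = θ 0 * c + margin (fun i => Fin.tail (x i)) y (Fin.tail θ) :=
        margin_eq_mul_add_margin_tail hx0 θ
    _ ≤ θ 0 * c + norm2 (Fin.tail θ) * γ :=
        add_le_add_right (margin_le_norm2_mul_of_isGreatest hγ _) _
    _ ≤ √(c ^ 2 + γ ^ 2) := mul_add_mul_le_sqrt hsq

/-- The bound of `margin_le_sqrt_of_isGreatest_tail` is attained by `(c, γ θ̃) / √(c² + γ²)`,
where `θ̃` attains `γ`; when `c = γ = 0` the division by zero makes this `θ = 0`. -/
lemma sqrt_mem_unitBallMargins {m n : ℕ} [Nonempty (Fin n)] {c γ : ℝ}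
    {x : Fin n → Fin (m + 1) → ℝ} {y : Fin n → ℝ} (hx0 : ∀ i, y i * x i 0 = c)
    (hγ : IsGreatest (unitBallMargins (fun i => Fin.tail (x i)) y) γ) :
    √(c ^ 2 + γ ^ 2) ∈ unitBallMargins x y := by
  obtain ⟨θt, hθt, hγθt⟩ := hγ.1
  have hγ_nonneg : 0 ≤ γ := hγ.2 ⟨0, by simp [norm2], (margin_zero _ _).symm⟩
  set s := √(c ^ 2 + γ ^ 2)
  have hs : s ^ 2 = c ^ 2 + γ ^ 2 := Real.sq_sqrt (by positivity)
  refine ⟨Fin.cons (c / s) ((γ / s) • θt), ?_, ?_⟩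
  · have hθt_sq : norm2 θt ^ 2 ≤ 1 := (sq_le_one_iff₀ (norm2_nonneg θt)).mpr hθt
    rw [← sq_le_one_iff₀ (norm2_nonneg _), sq_norm2_eq_sq_add_sq_norm2_tail, Fin.cons_zero,
      Fin.tail_cons, norm2_smul, mul_pow, sq_abs]
    calc (c / s) ^ 2 + (γ / s) ^ 2 * norm2 θt ^ 2
        ≤ (c / s) ^ 2 + (γ / s) ^ 2 := by
          gcongr
          exact mul_le_of_le_one_right (by positivity) hθt_sq
      _ = s ^ 2 / s ^ 2 := by rw [div_pow, div_pow, ← add_div, hs]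
      _ ≤ 1 := div_self_le_one _
  · rw [margin_eq_mul_add_margin_tail hx0, Fin.cons_zero, Fin.tail_cons,
      margin_smul _ _ _ (div_nonneg hγ_nonneg (Real.sqrt_nonneg _)), ← hγθt]
    calc s = s * s / s := (mul_self_div_self s).symm
      _ = c / s * c + γ / s * γ := by rw [← pow_two, hs]; ring

lemma isGreatest_unitBallMargins_of_isGreatest_tail {m n : ℕ} [Nonempty (Fin n)] {c γ : ℝ}
    {x : Fin n → Fin (m + 1) → ℝ} {y : Fin n → ℝ} (hx0 : ∀ i, y i * x i 0 = c)
    (hγ : IsGreatest (unitBallMargins (fun i => Fin.tail (x i)) y) γ) :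
    IsGreatest (unitBallMargins x y) √(c ^ 2 + γ ^ 2) := by
  refine ⟨sqrt_mem_unitBallMargins hx0 hγ, ?_⟩
  rintro _ ⟨θ, hθ, rfl⟩
  exact margin_le_sqrt_of_isGreatest_tail hx0 hγ hθ

theorem max_margin_value_general
    {m n : ℕ} (hn : 0 < n) (r : ℝ)
    (x : Fin n → Fin (m + 1) → ℝ) (y : Fin n → ℝ)
    (hy : ∀ i, y i = 1 ∨ y i = -1)
    (hx1 : ∀ i, x i 0 = y i * (r / 2))
    (γt : ℝ)
    (hγt : IsGreatest
      {c | ∃ θt : Fin m → ℝ, norm2 θt ≤ 1 ∧ c = margin (fun i => Fin.tail (x i)) y θt} γt) :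
    IsGreatest {c | ∃ θ : Fin (m + 1) → ℝ, norm2 θ ≤ 1 ∧ c = margin x y θ}
      (Real.sqrt (r ^ 2 / 4 + γt ^ 2)) := by
  have : Nonempty (Fin n) := ⟨⟨0, hn⟩⟩
  have hx0 : ∀ i, y i * x i 0 = r / 2 := fun i => by
    rcases hy i with h | h <;> simp [hx1, h]
  rw [show r ^ 2 / 4 + γt ^ 2 = (r / 2) ^ 2 + γt ^ 2 by ring]
  exact isGreatest_unitBallMargins_of_isGreatest_tail hx0 hγt

/-- For a dataset in `ℝ^{m+1} × {±1}` with first covariate coordinate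
`y_i · r/2`, whose induced dataset is linearly separable with maximum `ℓ2`-margin `γ̃ > 0`,
the maximum `ℓ2`-margin of the full dataset is `√(r²/4 + γ̃²)`: it is the greatest element of
the set of margins achieved by vectors of `ℓ2`-norm at most one. -/
theorem max_margin_value
    {m n : ℕ} (hm : 1 ≤ m) (hn : 0 < n) (r : ℝ) (hr : 0 < r)
    (x : Fin n → Fin (m + 1) → ℝ) (y : Fin n → ℝ)
    (hy : ∀ i, y i = 1 ∨ y i = -1)
    (hx1 : ∀ i, x i 0 = y i * (r / 2))
    (γt : ℝ) (hγt_pos : 0 < γt)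
    (hγt : IsGreatest
      {c | ∃ θt : Fin m → ℝ, norm2 θt ≤ 1 ∧ c = margin (fun i => Fin.tail (x i)) y θt} γt) :
    IsGreatest {c | ∃ θ : Fin (m + 1) → ℝ, norm2 θ ≤ 1 ∧ c = margin x y θ}
      (Real.sqrt (r ^ 2 / 4 + γt ^ 2)) :=
  max_margin_value_general hn r x y hy hx1 γt hγt

end
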